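/- Let x ∈ ℤ⁶ be a primitive non-characteristic vector with ⟨x,x⟩ = −d, where d is a positive even integer. Then the rank-5 lattice x^⊥ = {v ∈ ℤ⁶ : ⟨v,x⟩ = 0}, with the bilinear form induced from T, is isometric to ⟨d⟩ ⊥ U ⊥ ⟨−1⟩ ⊥ ⟨−1⟩; i.e. x^⊥ has a ℤ-basis with Gram matrix block diagonal with blocks (d), [[0,1],[1,0]], and diag(−1,−1). -/

import Mathlib

open Matrix

/-- Gram matrix of the lattice `T = U ⊥ U ⊥ ⟨-1⟩ ⊥ ⟨-1⟩` on `ℤ⁶`. -/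
def G6 : Matrix (Fin 6) (Fin 6) ℤ :=
  !![0, 1, 0, 0, 0, 0;
     1, 0, 0, 0, 0, 0;
     0, 0, 0, 1, 0, 0;
     0, 0, 1, 0, 0, 0;
     0, 0, 0, 0, -1, 0;
     0, 0, 0, 0, 0, -1]

/-- The bilinear form `⟨x, y⟩ = xᵀ G y` of the lattice `T`. -/
def bilT (x y : Fin 6 → ℤ) : ℤ := x ⬝ᵥ G6.mulVec y

/-- Membership in the orthogonal group `O(T)`: an integral matrix `B` with unit
determinant (so `B ∈ GL(6, ℤ)`) satisfying `Bᵀ G B = G`. -/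
def MemOT (B : Matrix (Fin 6) (Fin 6) ℤ) : Prop :=
  IsUnit B.det ∧ Bᵀ * G6 * B = G6

/-- A vector of `ℤ⁶` is primitive if the gcd of its coordinates is `1`. -/
def IsPrimitive (x : Fin 6 → ℤ) : Prop := Finset.univ.gcd x = 1

/-- A vector `x` is characteristic if `⟨x, y⟩ ≡ ⟨y, y⟩ (mod 2)` for all `y`. -/
def IsCharacteristic (x : Fin 6 → ℤ) : Prop :=
  ∀ y : Fin 6 → ℤ, bilT x y ≡ bilT y y [ZMOD 2]


/-- The orthogonal complement `x^⊥ = {v ∈ ℤ⁶ : ⟨v, x⟩ = 0}` as a sublattice of `T`. -/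
def perpZ (x : Fin 6 → ℤ) : Submodule ℤ (Fin 6 → ℤ) where
  carrier := {v | bilT v x = 0}
  add_mem' := by
    intro a b ha hb
    show bilT (a + b) x = 0
    have ha2 : bilT a x = 0 := ha
    have hb2 : bilT b x = 0 := hb
    simp only [bilT, add_dotProduct] at *
    rw [ha2, hb2, add_zero]
  zero_mem' := by
    show bilT 0 x = 0
    simp [bilT]
  smul_mem' := by
    intro r a ha
    show bilT (r • a) x = 0
    have ha2 : bilT a x = 0 := ha
    simp only [bilT, smul_dotProduct] at *
    rw [ha2, smul_zero]

/-- Gram matrix of the lattice `⟨d⟩ ⊥ U ⊥ ⟨-1⟩ ⊥ ⟨-1⟩`. -/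
def Gperp11 (d : ℤ) : Matrix (Fin 5) (Fin 5) ℤ :=
  !![d, 0, 0, 0, 0;
     0, 0, 1, 0, 0;
     0, 1, 0, 0, 0;
     0, 0, 0, -1, 0;
     0, 0, 0, 0, -1]

-- auxiliary development

@[simp] lemma cons_val_five' {α : Type*} {m : ℕ} (x : α) (u : Fin (m+5) → α) :
    vecCons x u 5 = vecHead (vecTail (vecTail (vecTail (vecTail u)))) := rfl

lemma bil_expand (v w : Fin 6 → ℤ) :
    bilT v w = v 0 * w 1 + v 1 * w 0 + v 2 * w 3 + v 3 * w 2 - v 4 * w 4 - v 5 * w 5 := by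
  simp [bilT, G6, Matrix.mulVec, dotProduct, Fin.sum_univ_six,
    Matrix.vecHead, Matrix.vecTail]
  ring

def mkMove (f g : (Fin 6 → ℤ) → (Fin 6 → ℤ))
    (hadd : ∀ v w, f (v + w) = f v + f w)
    (hsmul : ∀ (z : ℤ) (v), f (z • v) = z • f v)
    (hgf : ∀ v, g (f v) = v) (hfg : ∀ v, f (g v) = v) : (Fin 6 → ℤ) ≃ₗ[ℤ] (Fin 6 → ℤ) where
  toFun := f
  invFun := g
  left_inv := hgf
  right_inv := hfg
  map_add' := hadd
  map_smul' := hsmul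

set_option linter.unreachableTactic false
set_option linter.unusedTactic false

section Moves

def mA (n : ℤ) : (Fin 6 → ℤ) ≃ₗ[ℤ] (Fin 6 → ℤ) :=
  mkMove (fun v => ![v 0 - n * v 3, v 1, v 2 + n * v 1, v 3, v 4, v 5])
    (fun v => ![v 0 + n * v 3, v 1, v 2 - n * v 1, v 3, v 4, v 5])
    (by intro v w; funext i; fin_cases i <;> simp <;> ring)
    (by intro z v; funext i; fin_cases i <;> simp <;> ring)
    (by intro v; funext i; fin_cases i <;> simp <;> ring)
    (by intro v; funext i; fin_cases i <;> simp <;> ring)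

@[simp] lemma mA_apply (n : ℤ) (v : Fin 6 → ℤ) :
    mA n v = ![v 0 - n * v 3, v 1, v 2 + n * v 1, v 3, v 4, v 5] := rfl

lemma bil_mA (n : ℤ) (v w : Fin 6 → ℤ) : bilT (mA n v) (mA n w) = bilT v w := by
  simp only [mA_apply, bil_expand]; simp; try ring

def mB (n : ℤ) : (Fin 6 → ℤ) ≃ₗ[ℤ] (Fin 6 → ℤ) :=
  mkMove (fun v => ![v 0 - n * v 2, v 1, v 2, v 3 + n * v 1, v 4, v 5])
    (fun v => ![v 0 + n * v 2, v 1, v 2, v 3 - n * v 1, v 4, v 5])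
    (by intro v w; funext i; fin_cases i <;> simp <;> ring)
    (by intro z v; funext i; fin_cases i <;> simp <;> ring)
    (by intro v; funext i; fin_cases i <;> simp <;> ring)
    (by intro v; funext i; fin_cases i <;> simp <;> ring)

@[simp] lemma mB_apply (n : ℤ) (v : Fin 6 → ℤ) :
    mB n v = ![v 0 - n * v 2, v 1, v 2, v 3 + n * v 1, v 4, v 5] := rfl

lemma bil_mB (n : ℤ) (v w : Fin 6 → ℤ) : bilT (mB n v) (mB n w) = bilT v w := by
  simp only [mB_apply, bil_expand]; simp; try ring

def mC (n : ℤ) : (Fin 6 → ℤ) ≃ₗ[ℤ] (Fin 6 → ℤ) :=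
  mkMove (fun v => ![v 0, v 1 - n * v 3, v 2 + n * v 0, v 3, v 4, v 5])
    (fun v => ![v 0, v 1 + n * v 3, v 2 - n * v 0, v 3, v 4, v 5])
    (by intro v w; funext i; fin_cases i <;> simp <;> ring)
    (by intro z v; funext i; fin_cases i <;> simp <;> ring)
    (by intro v; funext i; fin_cases i <;> simp <;> ring)
    (by intro v; funext i; fin_cases i <;> simp <;> ring)

@[simp] lemma mC_apply (n : ℤ) (v : Fin 6 → ℤ) :
    mC n v = ![v 0, v 1 - n * v 3, v 2 + n * v 0, v 3, v 4, v 5] := rfl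

lemma bil_mC (n : ℤ) (v w : Fin 6 → ℤ) : bilT (mC n v) (mC n w) = bilT v w := by
  simp only [mC_apply, bil_expand]; simp; try ring

def mE1p (n : ℤ) : (Fin 6 → ℤ) ≃ₗ[ℤ] (Fin 6 → ℤ) :=
  mkMove (fun v => ![v 0 + n * (v 4 + v 5) + n^2 * v 1, v 1, v 2, v 3, v 4 + n * v 1, v 5 + n * v 1])
    (fun v => ![v 0 - n * (v 4 + v 5) + n^2 * v 1, v 1, v 2, v 3, v 4 - n * v 1, v 5 - n * v 1])
    (by intro v w; funext i; fin_cases i <;> simp <;> ring)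
    (by intro z v; funext i; fin_cases i <;> simp <;> ring)
    (by intro v; funext i; fin_cases i <;> simp <;> ring)
    (by intro v; funext i; fin_cases i <;> simp <;> ring)

@[simp] lemma mE1p_apply (n : ℤ) (v : Fin 6 → ℤ) :
    mE1p n v = ![v 0 + n * (v 4 + v 5) + n^2 * v 1, v 1, v 2, v 3, v 4 + n * v 1, v 5 + n * v 1] := rfl

lemma bil_mE1p (n : ℤ) (v w : Fin 6 → ℤ) : bilT (mE1p n v) (mE1p n w) = bilT v w := by
  simp only [mE1p_apply, bil_expand]; simp; try ring

def mE1m (n : ℤ) : (Fin 6 → ℤ) ≃ₗ[ℤ] (Fin 6 → ℤ) :=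
  mkMove (fun v => ![v 0 + n * (v 4 - v 5) + n^2 * v 1, v 1, v 2, v 3, v 4 + n * v 1, v 5 - n * v 1])
    (fun v => ![v 0 - n * (v 4 - v 5) + n^2 * v 1, v 1, v 2, v 3, v 4 - n * v 1, v 5 + n * v 1])
    (by intro v w; funext i; fin_cases i <;> simp <;> ring)
    (by intro z v; funext i; fin_cases i <;> simp <;> ring)
    (by intro v; funext i; fin_cases i <;> simp <;> ring)
    (by intro v; funext i; fin_cases i <;> simp <;> ring)

@[simp] lemma mE1m_apply (n : ℤ) (v : Fin 6 → ℤ) :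
    mE1m n v = ![v 0 + n * (v 4 - v 5) + n^2 * v 1, v 1, v 2, v 3, v 4 + n * v 1, v 5 - n * v 1] := rfl

lemma bil_mE1m (n : ℤ) (v w : Fin 6 → ℤ) : bilT (mE1m n v) (mE1m n w) = bilT v w := by
  simp only [mE1m_apply, bil_expand]; simp; try ring

def mE3p (n : ℤ) : (Fin 6 → ℤ) ≃ₗ[ℤ] (Fin 6 → ℤ) :=
  mkMove (fun v => ![v 0, v 1, v 2 + n * (v 4 + v 5) + n^2 * v 3, v 3, v 4 + n * v 3, v 5 + n * v 3])
    (fun v => ![v 0, v 1, v 2 - n * (v 4 + v 5) + n^2 * v 3, v 3, v 4 - n * v 3, v 5 - n * v 3])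
    (by intro v w; funext i; fin_cases i <;> simp <;> ring)
    (by intro z v; funext i; fin_cases i <;> simp <;> ring)
    (by intro v; funext i; fin_cases i <;> simp <;> ring)
    (by intro v; funext i; fin_cases i <;> simp <;> ring)

@[simp] lemma mE3p_apply (n : ℤ) (v : Fin 6 → ℤ) :
    mE3p n v = ![v 0, v 1, v 2 + n * (v 4 + v 5) + n^2 * v 3, v 3, v 4 + n * v 3, v 5 + n * v 3] := rfl

lemma bil_mE3p (n : ℤ) (v w : Fin 6 → ℤ) : bilT (mE3p n v) (mE3p n w) = bilT v w := by
  simp only [mE3p_apply, bil_expand]; simp; try ring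

def mE3m (n : ℤ) : (Fin 6 → ℤ) ≃ₗ[ℤ] (Fin 6 → ℤ) :=
  mkMove (fun v => ![v 0, v 1, v 2 + n * (v 4 - v 5) + n^2 * v 3, v 3, v 4 + n * v 3, v 5 - n * v 3])
    (fun v => ![v 0, v 1, v 2 - n * (v 4 - v 5) + n^2 * v 3, v 3, v 4 - n * v 3, v 5 + n * v 3])
    (by intro v w; funext i; fin_cases i <;> simp <;> ring)
    (by intro z v; funext i; fin_cases i <;> simp <;> ring)
    (by intro v; funext i; fin_cases i <;> simp <;> ring)
    (by intro v; funext i; fin_cases i <;> simp <;> ring)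

@[simp] lemma mE3m_apply (n : ℤ) (v : Fin 6 → ℤ) :
    mE3m n v = ![v 0, v 1, v 2 + n * (v 4 - v 5) + n^2 * v 3, v 3, v 4 + n * v 3, v 5 - n * v 3] := rfl

lemma bil_mE3m (n : ℤ) (v w : Fin 6 → ℤ) : bilT (mE3m n v) (mE3m n w) = bilT v w := by
  simp only [mE3m_apply, bil_expand]; simp; try ring

def s12 : (Fin 6 → ℤ) ≃ₗ[ℤ] (Fin 6 → ℤ) :=
  mkMove (fun v => ![v 1, v 0, v 2, v 3, v 4, v 5])
    (fun v => ![v 1, v 0, v 2, v 3, v 4, v 5])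
    (by intro v w; funext i; fin_cases i <;> simp <;> ring)
    (by intro z v; funext i; fin_cases i <;> simp <;> ring)
    (by intro v; funext i; fin_cases i <;> simp <;> ring)
    (by intro v; funext i; fin_cases i <;> simp <;> ring)

@[simp] lemma s12_apply (v : Fin 6 → ℤ) : s12 v = ![v 1, v 0, v 2, v 3, v 4, v 5] := rfl

lemma bil_s12 (v w : Fin 6 → ℤ) : bilT (s12 v) (s12 w) = bilT v w := by
  simp only [s12_apply, bil_expand]; simp; try ring

def s34 : (Fin 6 → ℤ) ≃ₗ[ℤ] (Fin 6 → ℤ) :=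
  mkMove (fun v => ![v 0, v 1, v 3, v 2, v 4, v 5])
    (fun v => ![v 0, v 1, v 3, v 2, v 4, v 5])
    (by intro v w; funext i; fin_cases i <;> simp <;> ring)
    (by intro z v; funext i; fin_cases i <;> simp <;> ring)
    (by intro v; funext i; fin_cases i <;> simp <;> ring)
    (by intro v; funext i; fin_cases i <;> simp <;> ring)

@[simp] lemma s34_apply (v : Fin 6 → ℤ) : s34 v = ![v 0, v 1, v 3, v 2, v 4, v 5] := rfl

lemma bil_s34 (v w : Fin 6 → ℤ) : bilT (s34 v) (s34 w) = bilT v w := by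
  simp only [s34_apply, bil_expand]; simp; try ring

def sU : (Fin 6 → ℤ) ≃ₗ[ℤ] (Fin 6 → ℤ) :=
  mkMove (fun v => ![v 2, v 3, v 0, v 1, v 4, v 5])
    (fun v => ![v 2, v 3, v 0, v 1, v 4, v 5])
    (by intro v w; funext i; fin_cases i <;> simp <;> ring)
    (by intro z v; funext i; fin_cases i <;> simp <;> ring)
    (by intro v; funext i; fin_cases i <;> simp <;> ring)
    (by intro v; funext i; fin_cases i <;> simp <;> ring)

@[simp] lemma sU_apply (v : Fin 6 → ℤ) : sU v = ![v 2, v 3, v 0, v 1, v 4, v 5] := rfl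

lemma bil_sU (v w : Fin 6 → ℤ) : bilT (sU v) (sU w) = bilT v w := by
  simp only [sU_apply, bil_expand]; simp; try ring

def nu12 : (Fin 6 → ℤ) ≃ₗ[ℤ] (Fin 6 → ℤ) :=
  mkMove (fun v => ![-v 0, -v 1, v 2, v 3, v 4, v 5])
    (fun v => ![-v 0, -v 1, v 2, v 3, v 4, v 5])
    (by intro v w; funext i; fin_cases i <;> simp <;> ring)
    (by intro z v; funext i; fin_cases i <;> simp <;> ring)
    (by intro v; funext i; fin_cases i <;> simp <;> ring)
    (by intro v; funext i; fin_cases i <;> simp <;> ring)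

@[simp] lemma nu12_apply (v : Fin 6 → ℤ) : nu12 v = ![-v 0, -v 1, v 2, v 3, v 4, v 5] := rfl

lemma bil_nu12 (v w : Fin 6 → ℤ) : bilT (nu12 v) (nu12 w) = bilT v w := by
  simp only [nu12_apply, bil_expand]; simp; try ring

end Moves

def Reach (x y : Fin 6 → ℤ) : Prop :=
  ∃ φ : (Fin 6 → ℤ) ≃ₗ[ℤ] (Fin 6 → ℤ), (∀ v w, bilT (φ v) (φ w) = bilT v w) ∧ φ x = y

lemma Reach.refl (x : Fin 6 → ℤ) : Reach x x :=
  ⟨LinearEquiv.refl ℤ _, by simp, rfl⟩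

lemma Reach.trans {x y z : Fin 6 → ℤ} (h1 : Reach x y) (h2 : Reach y z) : Reach x z := by
  obtain ⟨φ, hφ, hxy⟩ := h1
  obtain ⟨ψ, hψ, hyz⟩ := h2
  exact ⟨φ.trans ψ, fun v w => by simp [LinearEquiv.trans_apply, hψ, hφ],
    by simp [LinearEquiv.trans_apply, hxy, hyz]⟩

lemma Reach.symm {x y : Fin 6 → ℤ} (h : Reach x y) : Reach y x := by
  obtain ⟨φ, hφ, hxy⟩ := h
  refine ⟨φ.symm, fun v w => ?_, by simp [← hxy]⟩
  have := hφ (φ.symm v) (φ.symm w)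
  simpa using this.symm

lemma Reach.move (φ : (Fin 6 → ℤ) ≃ₗ[ℤ] (Fin 6 → ℤ))
    (h : ∀ v w, bilT (φ v) (φ w) = bilT v w) (x : Fin 6 → ℤ) : Reach x (φ x) :=
  ⟨φ, h, rfl⟩

lemma Reach.bil_self {x y : Fin 6 → ℤ} (h : Reach x y) : bilT y y = bilT x x := by
  obtain ⟨φ, hφ, hxy⟩ := h
  rw [← hxy]; exact hφ x x

lemma Reach.prim {x y : Fin 6 → ℤ} (h : Reach x y) (hx : IsPrimitive x) : IsPrimitive y := by
  obtain ⟨φ, hφ, hxy⟩ := h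
  set g : ℤ := Finset.univ.gcd y with hg
  have hdvd : ∀ i, g ∣ x i := by
    intro i
    have hx' : x = φ.symm y := by rw [← hxy]; simp
    have hstep : x i = ∑ j : Fin 6, y j * (φ.symm (Pi.single j (1:ℤ)) i) := by
      conv_lhs => rw [hx', ← Finset.univ_sum_single y]
      rw [map_sum, Finset.sum_apply]
      refine Finset.sum_congr rfl fun j _ => ?_
      have hsj : (Pi.single j (y j) : Fin 6 → ℤ) = y j • (Pi.single j (1:ℤ) : Fin 6 → ℤ) := by
        rw [← Pi.single_smul]; simp
      rw [hsj, _root_.map_smul]; simp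
    rw [hstep]
    refine Finset.dvd_sum fun j _ => Dvd.dvd.mul_right ?_ _
    exact Finset.gcd_dvd (Finset.mem_univ j)
  have hg1 : g ∣ 1 := by
    rw [show (1:ℤ) = Finset.univ.gcd x from hx.symm]
    exact Finset.dvd_gcd fun i _ => hdvd i
  rcases Int.isUnit_iff.mp (isUnit_of_dvd_one hg1) with h1 | h1
  · exact h1
  · exfalso
    have hn := Finset.normalize_gcd (s := (Finset.univ : Finset (Fin 6))) (f := y)
    rw [← hg, h1] at hn
    have := (Int.abs_eq_normalize (-1)).trans hn
    norm_num at this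

lemma odd_ne_zero {a : ℤ} (h : Odd a) : a ≠ 0 := by
  rcases h with ⟨m, hm⟩; omega

/-- Reduction step when `x 1` does not divide `x 2`. -/
lemma reduceC (x : Fin 6 → ℤ) (hodd : Odd (x 1)) (hb : 1 < x 1) (hndvd : ¬ (x 1 ∣ x 2)) :
    ∃ y, Reach x y ∧ Odd (y 1) ∧ (y 1).natAbs < (x 1).natAbs := by
  set b := x 1 with hbdef
  have hb0 : b ≠ 0 := by omega
  set r := x 2 % b with hrdef
  have hr0 : 0 ≤ r := Int.emod_nonneg _ hb0
  have hrlt : r < b := Int.emod_lt_of_pos _ (by omega)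
  have hrne : r ≠ 0 := fun h => hndvd (Int.dvd_of_emod_eq_zero h)
  have hdef : r = x 2 - b * (x 2 / b) := Int.emod_def (x 2) b
  -- choose odd representative c' with |c'| < b, and m with x 2 + m * b = c'
  obtain ⟨c', m, hmc, hc'odd, hc'lt⟩ :
      ∃ c' m, x 2 + m * b = c' ∧ Odd c' ∧ c'.natAbs < b.natAbs := by
    rcases Int.even_or_odd r with hEr | hOr
    · refine ⟨r - b, -(x 2 / b) - 1, by linarith [hdef], hEr.sub_odd hodd, ?_⟩
      have : r - b ≠ 0 := by
        intro h
        rcases hodd with ⟨k, hk⟩; rcases hEr with ⟨l, hl⟩; omega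
      omega
    · refine ⟨r, -(x 2 / b), by linarith [hdef], hOr, by omega⟩
  refine ⟨s12 (sU (mA m x)), ?_, ?_, ?_⟩
  · exact ((Reach.move (mA m) (bil_mA m) x).trans (Reach.move sU bil_sU _)).trans (Reach.move s12 bil_s12 _)
  · have : (s12 (sU (mA m x))) 1 = c' := by simp [← hmc, hbdef]; try ring
    rw [this]; exact hc'odd
  · have : (s12 (sU (mA m x))) 1 = c' := by simp [← hmc, hbdef]; try ring
    rw [this]; exact hc'lt

lemma dvd_gcd_contra (x : Fin 6 → ℤ) (hp : IsPrimitive x) (b : ℤ)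
    (h0 : b ∣ x 0) (h1 : b ∣ x 1) (h2 : b ∣ x 2) (h3 : b ∣ x 3) (h4 : b ∣ x 4) (h5 : b ∣ x 5) :
    b ∣ 1 := by
  rw [show (1:ℤ) = Finset.univ.gcd x from hp.symm]
  refine Finset.dvd_gcd fun i _ => ?_
  fin_cases i <;> assumption

/-- Main descent step: strictly decrease `|x 1|` keeping it odd. -/
lemma reach_step_pos (x : Fin 6 → ℤ) (hp : IsPrimitive x) (hodd : Odd (x 1)) (hb : 1 < x 1) :
    ∃ y, Reach x y ∧ Odd (y 1) ∧ (y 1).natAbs < (x 1).natAbs := by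
  set b := x 1 with hbdef
  by_cases hc : b ∣ x 2
  case neg => exact reduceC x hodd hb hc
  by_cases hf : b ∣ x 3
  case neg =>
    -- swap coords 2 and 3
    obtain ⟨y, h1, h2, h3⟩ := reduceC (s34 x) (by simpa) (by simpa) (by simpa using hf)
    exact ⟨y, (Reach.move s34 bil_s34 x).trans h1, h2, by simpa using h3⟩
  -- clear coordinate 3 using mB
  obtain ⟨t, ht⟩ := id hf
  set n : ℤ := -t with hndef
  set x1 : Fin 6 → ℤ := mB n x with hx1def
  have hx1 : Reach x x1 := Reach.move (mB n) (bil_mB n) x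
  have e1 : x1 1 = x 1 := by simp [hx1def]
  have e3 : x1 3 = 0 := by
    simp [hx1def, hndef, hbdef]
    rw [ht, hbdef]; ring
  have e2 : x1 2 = x 2 := by simp [hx1def]
  have e4 : x1 4 = x 4 := by simp [hx1def]
  have e5 : x1 5 = x 5 := by simp [hx1def]
  have e0 : x1 0 = x 0 + t * x 2 := by simp [hx1def, hndef]; try ring
  by_cases ha : b ∣ x 0
  case neg =>
    -- inject coordinate 0 into coordinate 2 via mC 1
    set x2 : Fin 6 → ℤ := mC 1 x1 with hx2def
    have hx2 : Reach x x2 := hx1.trans (Reach.move (mC 1) (bil_mC 1) x1)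
    have f1 : x2 1 = b := by simp [hx2def, e3, e1, hbdef]
    have f2 : x2 2 = x1 2 + x1 0 := by simp [hx2def]; try ring
    have hnd : ¬ (x2 1 ∣ x2 2) := by
      rw [f1, f2, e2, e0]
      intro hdvd
      apply ha
      have h1 : b ∣ t * x 2 := Dvd.dvd.mul_left hc _
      have h2 : b ∣ x 0 + (x 2 + t * x 2) := by
        rw [show x 0 + (x 2 + t * x 2) = x 2 + (x 0 + t * x 2) by ring]
        exact hdvd
      exact (dvd_add_right (dvd_add hc h1)).mp (by rwa [add_comm] at h2)
    obtain ⟨y, h1', h2', h3'⟩ := reduceC x2 (by rwa [f1]) (by rwa [f1]) hnd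
    exact ⟨y, hx2.trans h1', h2', by rwa [f1] at h3'⟩
  -- b divides x 0, x 2, x 3; use coordinates 4,5
  have hpq : ¬ (b ∣ x 4 + x 5) ∨ ¬ (b ∣ x 4 - x 5) := by
    by_contra hcon
    push_neg at hcon
    obtain ⟨hs, hd⟩ := hcon
    have h2x4 : b ∣ (x 4) * 2 := by
      have : (x 4) * 2 = (x 4 + x 5) + (x 4 - x 5) := by ring
      rw [this]; exact dvd_add hs hd
    have h2x5 : b ∣ (x 5) * 2 := by
      have : (x 5) * 2 = (x 4 + x 5) - (x 4 - x 5) := by ring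
      rw [this]; exact dvd_sub hs hd
    obtain ⟨k, hk⟩ := hodd
    have hcop : IsCoprime b 2 := ⟨1, -k, by rw [hbdef] at hk ⊢; omega⟩
    have h4 : b ∣ x 4 := hcop.dvd_of_dvd_mul_right h2x4
    have h5 : b ∣ x 5 := hcop.dvd_of_dvd_mul_right h2x5
    have := dvd_gcd_contra x hp b ha dvd_rfl hc hf h4 h5
    have := Int.le_of_dvd one_pos this
    omega
  rcases hpq with hpq | hpq
  · -- use mE3p 1
    set x2 : Fin 6 → ℤ := mE3p 1 x1 with hx2def
    have hx2 : Reach x x2 := hx1.trans (Reach.move (mE3p 1) (bil_mE3p 1) x1)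
    have f1 : x2 1 = b := by simp [hx2def, e1, hbdef]
    have f2 : x2 2 = x 2 + (x 4 + x 5) := by
      simp [hx2def]
      rw [e2, e3, e4, e5]; try ring
    have hnd : ¬ (x2 1 ∣ x2 2) := by
      rw [f1, f2]
      intro hdvd
      exact hpq ((dvd_add_right hc).mp hdvd)
    obtain ⟨y, h1', h2', h3'⟩ := reduceC x2 (by rwa [f1]) (by rwa [f1]) hnd
    exact ⟨y, hx2.trans h1', h2', by rwa [f1] at h3'⟩
  · set x2 : Fin 6 → ℤ := mE3m 1 x1 with hx2def
    have hx2 : Reach x x2 := hx1.trans (Reach.move (mE3m 1) (bil_mE3m 1) x1)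
    have f1 : x2 1 = b := by simp [hx2def, e1, hbdef]
    have f2 : x2 2 = x 2 + (x 4 - x 5) := by
      simp [hx2def]
      rw [e2, e3, e4, e5]; try ring
    have hnd : ¬ (x2 1 ∣ x2 2) := by
      rw [f1, f2]
      intro hdvd
      exact hpq ((dvd_add_right hc).mp hdvd)
    obtain ⟨y, h1', h2', h3'⟩ := reduceC x2 (by rwa [f1]) (by rwa [f1]) hnd
    exact ⟨y, hx2.trans h1', h2', by rwa [f1] at h3'⟩

lemma reach_step (x : Fin 6 → ℤ) (hp : IsPrimitive x) (hodd : Odd (x 1))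
    (hb : 1 < (x 1).natAbs) :
    ∃ y, Reach x y ∧ Odd (y 1) ∧ (y 1).natAbs < (x 1).natAbs := by
  rcases lt_or_gt_of_ne (odd_ne_zero hodd) with hneg | hpos
  · -- negate
    set x' : Fin 6 → ℤ := nu12 x with hx'def
    have hx' : Reach x x' := Reach.move nu12 bil_nu12 x
    have e1 : x' 1 = -(x 1) := by simp [hx'def]
    obtain ⟨y, h1, h2, h3⟩ := reach_step_pos x' (hx'.prim hp) (by rw [e1]; exact hodd.neg)
      (by rw [e1]; omega)
    exact ⟨y, hx'.trans h1, h2, by rw [e1] at h3; omega⟩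
  · exact reach_step_pos x hp hodd (by omega)

lemma key : ∀ (k : ℕ) (x : Fin 6 → ℤ), IsPrimitive x → Odd (x 1) → (x 1).natAbs ≤ k →
    ∃ y, Reach x y ∧ y 1 = 1 := by
  intro k
  induction k using Nat.strong_induction_on with
  | _ k ih =>
    intro x hp hodd hk
    rcases eq_or_ne (x 1) 1 with h1 | h1
    · exact ⟨x, Reach.refl x, h1⟩
    rcases eq_or_ne (x 1) (-1) with hm1 | hm1
    · refine ⟨nu12 x, Reach.move nu12 bil_nu12 x, by simp [hm1]⟩
    have hgt : 1 < (x 1).natAbs := by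
      rcases hodd with ⟨m, hm⟩; omega
    obtain ⟨y, hxy, hyodd, hylt⟩ := reach_step x hp hodd hgt
    obtain ⟨z, hyz, hz1⟩ := ih (y 1).natAbs (lt_of_lt_of_le hylt hk) y (hxy.prim hp) hyodd le_rfl
    exact ⟨z, hxy.trans hyz, hz1⟩

lemma exists_odd_coord (x : Fin 6 → ℤ) (hp : IsPrimitive x) (hnc : ¬ IsCharacteristic x)
    (heven : Even (bilT x x)) :
    Odd (x 0) ∨ Odd (x 1) ∨ Odd (x 2) ∨ Odd (x 3) := by
  by_contra hcon
  push_neg at hcon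
  obtain ⟨h0, h1, h2, h3⟩ := hcon
  rw [Int.not_odd_iff_even] at h0 h1 h2 h3
  have hbil := bil_expand x x
  have h45 : Even (x 4 * x 4 + x 5 * x 5) := by
    have hrw : x 4 * x 4 + x 5 * x 5
        = (x 0 * x 1 + x 1 * x 0 + x 2 * x 3 + x 3 * x 2) - bilT x x := by
      rw [hbil]; ring
    rw [hrw]
    exact ((((h0.mul_right _).add (h1.mul_right _)).add (h2.mul_right _)).add
      (h3.mul_right _)).sub heven
  have hx45 : (Even (x 4) ∧ Even (x 5)) ∨ (Odd (x 4) ∧ Odd (x 5)) := by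
    rcases Int.even_or_odd (x 4) with h4 | h4 <;> rcases Int.even_or_odd (x 5) with h5 | h5
    · exact Or.inl ⟨h4, h5⟩
    · exact absurd ((h4.mul_right _).add_odd (h5.mul h5)) (Int.not_odd_iff_even.mpr h45)
    · exact absurd (by rw [add_comm]; exact (h5.mul_right _).add_odd (h4.mul h4))
        (Int.not_odd_iff_even.mpr h45)
    · exact Or.inr ⟨h4, h5⟩
  rcases hx45 with ⟨h4, h5⟩ | ⟨h4, h5⟩
  · -- all coordinates even: contradicts primitivity
    have hdvd : (2:ℤ) ∣ 1 := by
      refine dvd_gcd_contra x hp 2 ?_ ?_ ?_ ?_ ?_ ?_ <;>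
        first
          | exact h0.two_dvd | exact h1.two_dvd | exact h2.two_dvd | exact h3.two_dvd
          | exact h4.two_dvd | exact h5.two_dvd
    omega
  · -- x is characteristic: contradiction
    apply hnc
    intro y
    rw [show (2:ℤ) = ((2:ℕ):ℤ) by norm_num, ← ZMod.intCast_eq_intCast_iff,
      bil_expand, bil_expand]
    push_cast
    have hadd : ∀ z : ZMod 2, z + z = 0 := by decide
    have c0 : ((x 0 : ℤ) : ZMod 2) = 0 := by
      rcases h0 with ⟨a, ha⟩; rw [ha]; push_cast; exact hadd _
    have c1 : ((x 1 : ℤ) : ZMod 2) = 0 := by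
      rcases h1 with ⟨a, ha⟩; rw [ha]; push_cast; exact hadd _
    have c2 : ((x 2 : ℤ) : ZMod 2) = 0 := by
      rcases h2 with ⟨a, ha⟩; rw [ha]; push_cast; exact hadd _
    have c3 : ((x 3 : ℤ) : ZMod 2) = 0 := by
      rcases h3 with ⟨a, ha⟩; rw [ha]; push_cast; exact hadd _
    have c4 : ((x 4 : ℤ) : ZMod 2) = 1 := by
      rcases h4 with ⟨a, ha⟩; rw [ha]; push_cast
      rw [show (2 : ZMod 2) = 0 by decide]
      ring
    have c5 : ((x 5 : ℤ) : ZMod 2) = 1 := by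
      rcases h5 with ⟨a, ha⟩; rw [ha]; push_cast
      rw [show (2 : ZMod 2) = 0 by decide]
      ring
    rw [c0, c1, c2, c3, c4, c5]
    generalize ((y 0 : ℤ) : ZMod 2) = b0
    generalize ((y 1 : ℤ) : ZMod 2) = b1
    generalize ((y 2 : ℤ) : ZMod 2) = b2
    generalize ((y 3 : ℤ) : ZMod 2) = b3
    generalize ((y 4 : ℤ) : ZMod 2) = b4
    generalize ((y 5 : ℤ) : ZMod 2) = b5
    revert b0 b1 b2 b3 b4 b5
    decide

lemma init_odd (x : Fin 6 → ℤ) (hp : IsPrimitive x) (hnc : ¬ IsCharacteristic x)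
    (heven : Even (bilT x x)) :
    ∃ y, Reach x y ∧ Odd (y 1) := by
  rcases exists_odd_coord x hp hnc heven with h | h | h | h
  · exact ⟨s12 x, Reach.move s12 bil_s12 x, by simpa⟩
  · exact ⟨x, Reach.refl x, h⟩
  · refine ⟨s12 (sU x), (Reach.move sU bil_sU x).trans (Reach.move s12 bil_s12 _), by simpa⟩
  · exact ⟨sU x, Reach.move sU bil_sU x, by simpa⟩

lemma finish_reach (e : ℤ) (x : Fin 6 → ℤ) (hb : x 1 = 1) (hnorm : bilT x x = -(e + e)) :
    Reach x ![1, -e, 0, 0, 0, 0] := by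
  have hexp := bil_expand x x
  rw [hnorm] at hexp
  -- parities
  have hsq45 : Even (x 4 * x 4 + x 5 * x 5) := by
    refine ⟨x 0 * x 1 + x 2 * x 3 + e, by linear_combination hexp⟩
  have h45 : Even (x 4 + x 5) := by
    rcases Int.even_or_odd (x 4) with h4 | h4 <;> rcases Int.even_or_odd (x 5) with h5 | h5
    · exact h4.add h5
    · exact absurd ((h4.mul_right _).add_odd (h5.mul h5)) (Int.not_odd_iff_even.mpr hsq45)
    · exact absurd (by rw [add_comm]; exact (h5.mul_right _).add_odd (h4.mul h4))
        (Int.not_odd_iff_even.mpr hsq45)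
    · exact h4.add_odd h5
  obtain ⟨s, hs⟩ : ∃ s, x 4 + x 5 = s + s := h45
  obtain ⟨t, ht⟩ : ∃ t, x 5 - x 4 = t + t := ⟨s - x 4, by omega⟩
  set y1 : Fin 6 → ℤ := mE1m t x with hy1def
  have hr1 : Reach x y1 := Reach.move (mE1m t) (bil_mE1m t) x
  have y1_1 : y1 1 = 1 := by simp [hy1def, hb]
  have y1_4 : y1 4 = s := by simp [hy1def, hb]; omega
  have y1_5 : y1 5 = s := by simp [hy1def, hb]; omega
  have y1_2 : y1 2 = x 2 := by simp [hy1def]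
  have y1_3 : y1 3 = x 3 := by simp [hy1def]
  set y2 : Fin 6 → ℤ := mE1p (-s) y1 with hy2def
  have hr2 : Reach x y2 := hr1.trans (Reach.move (mE1p (-s)) (bil_mE1p (-s)) y1)
  have y2_1 : y2 1 = 1 := by simp [hy2def, y1_1]
  have y2_4 : y2 4 = 0 := by simp [hy2def, y1_4, y1_1]
  have y2_5 : y2 5 = 0 := by simp [hy2def, y1_5, y1_1]
  have y2_2 : y2 2 = x 2 := by simp [hy2def, y1_2]
  have y2_3 : y2 3 = x 3 := by simp [hy2def, y1_3]
  set y3 : Fin 6 → ℤ := mA (-(x 2)) y2 with hy3def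
  have hr3 : Reach x y3 := hr2.trans (Reach.move (mA (-(x 2))) (bil_mA (-(x 2))) y2)
  have y3_1 : y3 1 = 1 := by simp [hy3def, y2_1]
  have y3_2 : y3 2 = 0 := by simp [hy3def, y2_2, y2_1]
  have y3_3 : y3 3 = x 3 := by simp [hy3def, y2_3]
  have y3_4 : y3 4 = 0 := by simp [hy3def, y2_4]
  have y3_5 : y3 5 = 0 := by simp [hy3def, y2_5]
  set y4 : Fin 6 → ℤ := mB (-(x 3)) y3 with hy4def
  have hr4 : Reach x y4 := hr3.trans (Reach.move (mB (-(x 3))) (bil_mB (-(x 3))) y3)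
  have y4_1 : y4 1 = 1 := by simp [hy4def, y3_1]
  have y4_2 : y4 2 = 0 := by simp [hy4def, y3_2]
  have y4_3 : y4 3 = 0 := by simp [hy4def, y3_3, y3_1]
  have y4_4 : y4 4 = 0 := by simp [hy4def, y3_4]
  have y4_5 : y4 5 = 0 := by simp [hy4def, y3_5]
  have hnorm4 : bilT y4 y4 = -(e + e) := by rw [hr4.bil_self, hnorm]
  have y4_0 : y4 0 = -e := by
    have := bil_expand y4 y4
    rw [hnorm4, y4_1, y4_2, y4_3, y4_4, y4_5] at this
    omega
  have : s12 y4 = ![1, -e, 0, 0, 0, 0] := by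
    funext i
    fin_cases i <;> simp [y4_0, y4_1, y4_2, y4_3, y4_4, y4_5]
  rw [← this]
  exact hr4.trans (Reach.move s12 bil_s12 y4)

lemma reach_std (d e : ℤ) (he : d = e + e) (x : Fin 6 → ℤ) (hprim : IsPrimitive x)
    (hnonchar : ¬ IsCharacteristic x) (hx : bilT x x = -d) :
    Reach x ![1, -e, 0, 0, 0, 0] := by
  have heven : Even (bilT x x) := by rw [hx, he]; exact ⟨-e, by ring⟩
  obtain ⟨y, hxy, hyodd⟩ := init_odd x hprim hnonchar heven
  obtain ⟨z, hyz, hz1⟩ := key (y 1).natAbs y (hxy.prim hprim) hyodd le_rfl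
  have hxz : Reach x z := hxy.trans hyz
  have hznorm : bilT z z = -(e + e) := by rw [hxz.bil_self, hx, he]
  exact hxz.trans (finish_reach e z hz1 hznorm)

def L0v (e : ℤ) (c : Fin 5 → ℤ) : Fin 6 → ℤ := ![c 0, e * c 0, c 1, c 2, c 3, c 4]

def Rrv (v : Fin 6 → ℤ) : Fin 5 → ℤ := ![v 0, v 2, v 3, v 4, v 5]

def Gperp11' (d : ℤ) : Matrix (Fin 5) (Fin 5) ℤ :=
  !![d, 0, 0, 0, 0;
     0, 0, 1, 0, 0;
     0, 1, 0, 0, 0;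
     0, 0, 0, -1, 0;
     0, 0, 0, 0, -1]

lemma gram_base (e : ℤ) (i j : Fin 5) :
    bilT (L0v e (Pi.single i 1)) (L0v e (Pi.single j 1)) = Gperp11' (e + e) i j := by
  fin_cases i <;> fin_cases j <;>
    (rw [bil_expand]; simp [L0v, Gperp11', Pi.single_apply, Matrix.vecHead, Matrix.vecTail]; try omega)

theorem stmt11 (d : ℤ) (hd : 0 < d) (hdeven : Even d) (x : Fin 6 → ℤ)
    (hprim : IsPrimitive x) (hnonchar : ¬ IsCharacteristic x)
    (hx : bilT x x = -d) :
    ∃ b : Module.Basis (Fin 5) ℤ ↥(perpZ x),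
      ∀ i j : Fin 5, bilT ((b i : Fin 6 → ℤ)) ((b j : Fin 6 → ℤ)) = Gperp11 d i j := by
  obtain ⟨e, he⟩ := hdeven
  obtain ⟨φ, hφ, hφx⟩ := (reach_std d e he x hprim hnonchar hx).symm
  -- φ is an isometry with φ ![1, -e, 0, 0, 0, 0] = x
  have hmemx0 : ∀ c, bilT (L0v e c) ![1, -e, 0, 0, 0, 0] = 0 := by
    intro c; rw [bil_expand]; simp [L0v]; ring
  have hmem : ∀ c, φ (L0v e c) ∈ perpZ x := by
    intro c
    show bilT (φ (L0v e c)) x = 0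
    rw [← hφx, hφ]
    exact hmemx0 c
  have hL0add : ∀ c c', L0v e (c + c') = L0v e c + L0v e c' := by
    intro c c'; funext i; fin_cases i <;> simp [L0v] <;> ring
  have hL0smul : ∀ (z : ℤ) (c), L0v e (z • c) = z • L0v e c := by
    intro z c; funext i; fin_cases i <;> simp [L0v] <;> ring
  let E : (Fin 5 → ℤ) ≃ₗ[ℤ] perpZ x :=
    { toFun := fun c => ⟨φ (L0v e c), hmem c⟩
      map_add' := by
        intro c c'
        apply Subtype.ext
        show φ (L0v e (c + c')) = φ (L0v e c) + φ (L0v e c')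
        rw [hL0add, map_add]
      map_smul' := by
        intro z c
        apply Subtype.ext
        show φ (L0v e (z • c)) = z • φ (L0v e c)
        rw [hL0smul, _root_.map_smul]
      invFun := fun v => Rrv (φ.symm ↑v)
      left_inv := by
        intro c
        simp only [LinearEquiv.symm_apply_apply]
        funext i; fin_cases i <;> simp [Rrv, L0v]
      right_inv := by
        intro v
        apply Subtype.ext
        have hv : bilT (↑v) x = 0 := v.2
        have hw : bilT (φ.symm ↑v) ![1, -e, 0, 0, 0, 0] = 0 := by
          rw [← hφ (φ.symm ↑v) ![1, -e, 0, 0, 0, 0], LinearEquiv.apply_symm_apply, hφx]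
          exact hv
        have hw1 : (φ.symm (↑v : Fin 6 → ℤ)) 1 = e * (φ.symm (↑v : Fin 6 → ℤ)) 0 := by
          rw [bil_expand] at hw
          simp at hw
          linarith
        show φ (L0v e (Rrv (φ.symm ↑v))) = ↑v
        have : L0v e (Rrv (φ.symm ↑v)) = φ.symm ↑v := by
          funext i; fin_cases i <;> simp [Rrv, L0v] <;> rw [hw1]
        rw [this, LinearEquiv.apply_symm_apply] }
  refine ⟨(Pi.basisFun ℤ (Fin 5)).map E, ?_⟩
  intro i j
  have hb : ∀ k : Fin 5, (((Pi.basisFun ℤ (Fin 5)).map E k : perpZ x) : Fin 6 → ℤ)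
      = φ (L0v e (Pi.single k 1)) := by
    intro k
    rw [Module.Basis.map_apply]
    have : (Pi.basisFun ℤ (Fin 5)) k = Pi.single k 1 := by
      funext l
      simp [Pi.basisFun_apply, Pi.single_apply]
    rw [this]
    rfl
  rw [hb i, hb j, hφ]
  have := gram_base e i j
  rw [this]
  rw [he]
  rfl
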